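/- There exists an incomplete table T over a schema R with attribute sets X, Y ⊆ R such that T satisfies the strongly possible multivalued dependency X ↠_sp Y but T violates Lien's null multivalued dependency (NMVD) X ↠ Y. -/

import Mathlib

/- Common framework: incomplete tables, strongly possible worlds and constraints.
   A tuple assigns each attribute a value in `Option V`, with `none` encoding the
   null marker ⊥.  In the degenerate case of an attribute whose active domain is
   empty, the fresh symbol `s` (outside all domains) is encoded by `none` in the
   strongly possible world: it is a single fixed symbol, equal only to itself and
   different from every domain value, exactly as `none` behaves. -/

namespace SPDB

variable {α V : Type} [DecidableEq α] [DecidableEq V]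

/-- A tuple over attribute type `α` with values in `V`; `none` is the null ⊥. -/
abbrev Tuple (α V : Type) := α → Option V

/-- An incomplete table: a finite multiset of tuples. -/
abbrev Table (α V : Type) := Multiset (Tuple α V)

/-- The active domain of attribute `A` in table `T`: the non-null values in column `A`. -/
def VD (T : Table α V) (A : α) : Finset V :=
  (T.filterMap fun t => t A).toFinset

/-- `t'` is a strongly possible extension of `t` w.r.t. the active domains of `T`:
non-null entries are kept, each null is replaced by an active domain value
(by the fresh symbol, encoded `none`, if the active domain is empty). -/
def spExt (T : Table α V) (t t' : Tuple α V) : Prop :=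
  ∀ A, (t A ≠ none → t' A = t A) ∧
       (t A = none → if (VD T A).Nonempty then ∃ v ∈ VD T A, t' A = some v
                     else t' A = none)

/-- `T'` is a strongly possible world of `T`. -/
def spWorld (T T' : Table α V) : Prop := Multiset.Rel (spExt T) T T'

/-- Two tuples agree on the attribute set `X`. -/
def agrees (X : Finset α) (t1 t2 : Tuple α V) : Prop := ∀ A ∈ X, t1 A = t2 A

/-- Weak similarity on the attribute set `X`. -/
def weakSim (X : Finset α) (t1 t2 : Tuple α V) : Prop :=
  ∀ A ∈ X, t1 A = t2 A ∨ t1 A = none ∨ t2 A = none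

/-- `t` is `X`-total: no nulls among the attributes of `X`. -/
def isTotal (X : Finset α) (t : Tuple α V) : Prop := ∀ A ∈ X, t A ≠ none

instance (X : Finset α) : DecidablePred (isTotal (V := V) X) := fun t =>
  decidable_of_iff (∀ A ∈ X, t A ≠ none) Iff.rfl

/-- Projection of a tuple to the attribute set `X` (nulls outside `X`). -/
def proj (X : Finset α) (t : Tuple α V) : Tuple α V :=
  fun A => if A ∈ X then t A else none

/-- A (complete) table satisfies the key `K`: tuple occurrences are pairwise distinct on `K`. -/
def keyOn (K : Finset α) (T' : Table α V) : Prop := (T'.map (proj K)).Nodup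

/-- A (complete) table satisfies the functional dependency `X → Y`. -/
def FD (X Y : Finset α) (T' : Table α V) : Prop :=
  ∀ t1 ∈ T', ∀ t2 ∈ T', agrees X t1 t2 → agrees Y t1 t2

/-- A (complete) table over schema `R` satisfies the multivalued dependency `X ↠ Y`. -/
def MVD (R X Y : Finset α) (T' : Table α V) : Prop :=
  ∀ t1 ∈ T', ∀ t2 ∈ T', agrees X t1 t2 →
    ∃ t ∈ T', agrees (X ∪ Y) t t1 ∧ agrees (X ∪ (R \ Y)) t t2

/-- A (complete) table satisfies the cross join `X × Y`. -/
def CJ (X Y : Finset α) (T' : Table α V) : Prop :=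
  ∀ t1 ∈ T', ∀ t2 ∈ T', ∃ t ∈ T', agrees X t t1 ∧ agrees Y t t2

/-- `K` is a strongly possible key of `T`: `sp⟨K⟩`. -/
def spKey (T : Table α V) (K : Finset α) : Prop :=
  ∃ T', spWorld T T' ∧ keyOn K T'

/-- The strongly possible functional dependency `X →_sp Y` holds in `T`. -/
def spFD (T : Table α V) (X Y : Finset α) : Prop :=
  ∃ T', spWorld T T' ∧ FD X Y T'

/-- The strongly possible multivalued dependency `X ↠_sp Y` holds in `T` over schema `R`. -/
def spMVD (R : Finset α) (T : Table α V) (X Y : Finset α) : Prop :=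
  ∃ T', spWorld T T' ∧ MVD R X Y T'

/-- The strongly possible cross join `X ×_sp Y` holds in `T`. -/
def spCJ (T : Table α V) (X Y : Finset α) : Prop :=
  ∃ T', spWorld T T' ∧ CJ X Y T'

/-- Lien's null multivalued dependency `X ↠ Y` over schema `R`. -/
def NMVD (R : Finset α) (T : Table α V) (X Y : Finset α) : Prop :=
  ∀ t1 ∈ T, ∀ t2 ∈ T, isTotal X t1 → isTotal X t2 → agrees X t1 t2 →
    ∃ t ∈ T, agrees (X ∪ Y) t t1 ∧ agrees (X ∪ (R \ Y)) t t2

/-- The minimum number of tuples whose removal from `T` makes `P` hold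
(`T = T₀ + S` means that `S` is a submultiset of `T` and `T₀ = T ∖ S`). -/
noncomputable def g3Card (T : Table α V) (P : Table α V → Prop) : ℕ :=
  sInf {n : ℕ | ∃ T₀ S : Table α V, T = T₀ + S ∧ P T₀ ∧ Multiset.card S = n}

/-- `g3`: the minimum, over submultisets `S` of `T` whose removal makes the
constraint `P` hold, of `|S|/|T|`. -/
noncomputable def g3 (T : Table α V) (P : Table α V → Prop) : ℚ :=
  (g3Card T P : ℚ) / (Multiset.card T : ℚ)

/-- The minimum number of tuples whose addition to `T` makes `P` hold. -/
noncomputable def g5Card (T : Table α V) (P : Table α V → Prop) : ℕ :=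
  sInf {n : ℕ | ∃ S : Table α V, P (T + S) ∧ Multiset.card S = n}

/-- `g5`: the minimum, over finite multisets `S` of tuples whose addition makes
the constraint `P` hold, of `|S|/|T|`. -/
noncomputable def g5 (T : Table α V) (P : Table α V → Prop) : ℚ :=
  (g5Card T P : ℚ) / (Multiset.card T : ℚ)

end SPDB

/- `T = {(1, 1, 2), (1, 2, ⊥)}` over `R = {0, 1, 2}` with `X = {0}`, `Y = {1}`: filling the null
with the only active value `2` makes column `2` constant, so the MVD holds trivially, while in `T`
itself neither tuple combines the `Y`-value of one with the `R ∖ Y`-values of the other. -/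

namespace SPDB

variable {α V : Type}

section VD

variable [DecidableEq V] {T : Table α V} {A : α}

theorem mem_VD {v : V} : v ∈ VD T A ↔ ∃ t ∈ T, t A = some v := by
  simp [VD]

theorem VD_eq_empty : VD T A = ∅ ↔ ∀ t ∈ T, t A = none := by
  simp only [Finset.eq_empty_iff_forall_notMem, mem_VD, Option.eq_none_iff_forall_ne_some]
  grind

theorem spExt_apply_of_column_null {t t' : Tuple α V} (hA : t' A = t A)
    (hcol : t A = none → ∀ s ∈ T, s A = none) :
    (t A ≠ none → t' A = t A) ∧
      (t A = none → if (VD T A).Nonempty then ∃ v ∈ VD T A, t' A = some v else t' A = none) := by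
  refine ⟨fun _ => hA, fun hnull => ?_⟩
  rw [VD_eq_empty.2 (hcol hnull), if_neg Finset.not_nonempty_empty, hA, hnull]

theorem spExt_self {t : Tuple α V} (h : ∀ A, t A = none → ∀ s ∈ T, s A = none) :
    spExt T t t :=
  fun A => spExt_apply_of_column_null rfl (h A)

theorem spExt_update [DecidableEq α] {t : Tuple α V} {v : V} (hA : t A = none)
    (hv : ∃ s ∈ T, s A = some v) (h : ∀ B ≠ A, t B = none → ∀ s ∈ T, s B = none) :
    spExt T t (Function.update t A (some v)) := by
  intro B
  by_cases hB : B = A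
  · subst hB
    have hVD : v ∈ VD T B := mem_VD.2 hv
    refine ⟨fun h' => absurd hA h', fun _ => ?_⟩
    rw [if_pos ⟨v, hVD⟩, Function.update_self]
    exact ⟨v, hVD, rfl⟩
  · exact spExt_apply_of_column_null (Function.update_of_ne hB _ _) (h B hB)

theorem spWorld_pair {t₁ t₂ t₁' t₂' : Tuple α V} (h₁ : spExt {t₁, t₂} t₁ t₁')
    (h₂ : spExt {t₁, t₂} t₂ t₂') : spWorld {t₁, t₂} {t₁', t₂'} :=
  Multiset.Rel.cons h₁ (Multiset.Rel.cons h₂ Multiset.Rel.zero)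

end VD

variable [DecidableEq α]

theorem MVD_of_forall_agrees_compl {R X Y : Finset α} {T' : Table α V} {t₀ : Tuple α V}
    (h : ∀ t ∈ T', agrees (R \ Y) t t₀) : MVD R X Y T' := by
  intro t₁ h₁ t₂ h₂ hX
  refine ⟨t₁, h₁, fun _ _ => rfl, fun A hA => ?_⟩
  rcases Finset.mem_union.1 hA with hA | hA
  · exact hX A hA
  · exact (h t₁ h₁ A hA).trans (h t₂ h₂ A hA).symm

theorem not_NMVD_pair {R X Y : Finset α} {t₁ t₂ : Tuple α V} (h₁ : isTotal X t₁)
    (h₂ : isTotal X t₂) (hX : agrees X t₁ t₂) (hY : ¬ agrees (X ∪ Y) t₂ t₁)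
    (hZ : ¬ agrees (X ∪ (R \ Y)) t₁ t₂) : ¬ NMVD R {t₁, t₂} X Y := by
  intro h
  obtain ⟨t, ht, htY, htZ⟩ := h t₁ (by simp) t₂ (by simp) h₁ h₂ hX
  rcases (by simpa using ht : t = t₁ ∨ t = t₂) with rfl | rfl
  exacts [hZ htZ, hY htY]

end SPDB

namespace SPDB.NMVDCounterexample

def t₁ : Tuple ℕ ℕ
  | 0 => some 1
  | 1 => some 1
  | 2 => some 2
  | _ => none

def t₂ : Tuple ℕ ℕ
  | 0 => some 1
  | 1 => some 2
  | _ => none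

theorem t₁_eq_none_iff {A : ℕ} : t₁ A = none ↔ 3 ≤ A := by
  rcases A with _ | _ | _ | A <;> simp [t₁]

theorem t₂_eq_none_iff {A : ℕ} : t₂ A = none ↔ 2 ≤ A := by
  rcases A with _ | _ | A <;> simp [t₂]

theorem forall_mem_eq_none {A : ℕ} (hA : 3 ≤ A) : ∀ s ∈ ({t₁, t₂} : Table ℕ ℕ), s A = none := by
  simp [t₁_eq_none_iff.2 hA, t₂_eq_none_iff.2 (by omega : 2 ≤ A)]

theorem spMVD_holds : spMVD {0, 1, 2} {t₁, t₂} {0} {1} := by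
  refine ⟨{t₁, Function.update t₂ 2 (some 2)}, spWorld_pair ?_ ?_, ?_⟩
  · exact spExt_self fun A hA => forall_mem_eq_none (t₁_eq_none_iff.1 hA)
  · refine spExt_update (t₂_eq_none_iff.2 le_rfl) ⟨t₁, by simp, rfl⟩ fun A hA hnull => ?_
    exact forall_mem_eq_none (by have := t₂_eq_none_iff.1 hnull; omega)
  · refine MVD_of_forall_agrees_compl (t₀ := t₁) fun t ht => ?_
    rcases (by simpa using ht : t = t₁ ∨ t = _) with rfl | rfl
    · exact fun _ _ => rfl
    · simp only [agrees]
      decide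

theorem not_NMVD : ¬ NMVD {0, 1, 2} {t₁, t₂} {0} {1} := by
  refine not_NMVD_pair ?_ ?_ ?_ ?_ ?_ <;> simp only [isTotal, agrees] <;> decide

end SPDB.NMVDCounterexample

open SPDB in
/-- there is a table satisfying the spMVD `X ↠_sp Y` but violating
Lien's NMVD `X ↠ Y`. -/
theorem statement13 :
    ∃ (R X Y : Finset ℕ) (T : Table ℕ ℕ), X ⊆ R ∧ Y ⊆ R ∧
      spMVD R T X Y ∧ ¬ NMVD R T X Y :=
  ⟨_, _, _, _, by decide, by decide, NMVDCounterexample.spMVD_holds, NMVDCounterexample.not_NMVD⟩
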